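/- arXiv:1411.0423 — 2 statements merged into one kernel-verified Lean document; each statement's English description precedes it below -/
import Mathlib

section
/- For any invertible linear map g on ℝ^d and unit vectors u, v ∈ ℝ^d, the angular distance satisfies d(g·ū, g·v̄) ≤ N(g)^4 · d(ū, v̄), where d(ū, v̄) = ‖u ∧ v‖/(‖u‖‖v‖) (equivalently, |sin| of the angle) and N(g) = max(‖g‖, ‖g⁻¹‖). -/
open scoped RealInnerProductSpace

/-- The angular (projective) distance `d(ū,v̄) = ‖u ∧ v‖/(‖u‖‖v‖)`, where
`‖u ∧ v‖ = √(‖u‖²‖v‖² - ⟪u,v⟫²)` is the area of the parallelogram spanned by `u` and `v`. -/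
noncomputable def projDist {d : ℕ} (u v : EuclideanSpace ℝ (Fin d)) : ℝ :=
  Real.sqrt (‖u‖ ^ 2 * ‖v‖ ^ 2 - ⟪u, v⟫ ^ 2) / (‖u‖ * ‖v‖)

/-- `N(g) = max(‖g‖, ‖g⁻¹‖)` for an invertible linear map `g` of `ℝ^d`. -/
noncomputable def matN {d : ℕ}
    (g : EuclideanSpace ℝ (Fin d) ≃L[ℝ] EuclideanSpace ℝ (Fin d)) : ℝ :=
  max ‖(g : EuclideanSpace ℝ (Fin d) →L[ℝ] EuclideanSpace ℝ (Fin d))‖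
    ‖(g.symm : EuclideanSpace ℝ (Fin d) →L[ℝ] EuclideanSpace ℝ (Fin d))‖

/-!
The area `‖a ∧ b‖ = √(‖a‖²‖b‖² - ⟪a,b⟫²)` does not change under shears `b ↦ b - t • a`, and
it equals `‖a‖ ‖b - t • a‖` when `b - t • a ⊥ a`, while Cauchy–Schwarz bounds it by
`‖a‖ ‖b - t • a‖` for every `t`. Hence `‖g a ∧ g b‖ ≤ ‖g a‖ ‖g (b - t • a)‖
≤ ‖g‖ ‖g a‖ ‖a ∧ b‖ / ‖a‖`, and dividing by `‖g a‖ ‖g b‖ ≥ ‖g a‖ ‖b‖ / ‖g⁻¹‖` gives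
`d(g·ū, g·v̄) ≤ ‖g‖ ‖g⁻¹‖ d(ū, v̄) ≤ N(g)² d(ū, v̄)`. Finally `N(g)² ≤ N(g)⁴`, since
`1 ≤ ‖g‖ ‖g⁻¹‖ ≤ N(g)²` unless `d = 0`.
-/

section Gram

variable {E F : Type*} [NormedAddCommGroup E] [InnerProductSpace ℝ E]
  [NormedAddCommGroup F] [InnerProductSpace ℝ F]

lemma gram_sub_smul (a b : E) (t : ℝ) :
    ‖a‖ ^ 2 * ‖b - t • a‖ ^ 2 - ⟪a, b - t • a⟫ ^ 2 = ‖a‖ ^ 2 * ‖b‖ ^ 2 - ⟪a, b⟫ ^ 2 := by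
  simp only [← real_inner_self_eq_norm_sq, inner_sub_left, inner_sub_right,
    real_inner_smul_left, real_inner_smul_right, real_inner_comm a b]
  ring

lemma sqrt_gram_le_norm_mul_norm_sub_smul (a b : E) (t : ℝ) :
    √(‖a‖ ^ 2 * ‖b‖ ^ 2 - ⟪a, b⟫ ^ 2) ≤ ‖a‖ * ‖b - t • a‖ := by
  rw [← gram_sub_smul a b t]
  exact Real.sqrt_le_iff.mpr ⟨by positivity, by nlinarith [sq_nonneg ⟪a, b - t • a⟫]⟩

lemma exists_norm_mul_norm_sub_smul_eq_sqrt_gram (a b : E) :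
    ∃ t : ℝ, ‖a‖ * ‖b - t • a‖ = √(‖a‖ ^ 2 * ‖b‖ ^ 2 - ⟪a, b⟫ ^ 2) := by
  rcases eq_or_ne a 0 with rfl | ha
  · exact ⟨0, by simp⟩
  refine ⟨⟪a, b⟫ / ‖a‖ ^ 2, ?_⟩
  have h_orth : ⟪a, b - (⟪a, b⟫ / ‖a‖ ^ 2) • a⟫ = 0 := by
    rw [inner_sub_right, real_inner_smul_right, real_inner_self_eq_norm_sq,
      div_mul_cancel₀ _ (by positivity), sub_self]
  rw [← gram_sub_smul a b (⟪a, b⟫ / ‖a‖ ^ 2), h_orth, ← mul_pow, zero_pow two_ne_zero, sub_zero,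
    Real.sqrt_sq (by positivity)]

lemma norm_mul_sqrt_gram_map_le (g : E →L[ℝ] F) (a b : E) :
    ‖a‖ * √(‖g a‖ ^ 2 * ‖g b‖ ^ 2 - ⟪g a, g b⟫ ^ 2)
      ≤ ‖g‖ * ‖g a‖ * √(‖a‖ ^ 2 * ‖b‖ ^ 2 - ⟪a, b⟫ ^ 2) := by
  obtain ⟨t, ht⟩ := exists_norm_mul_norm_sub_smul_eq_sqrt_gram a b
  calc ‖a‖ * √(‖g a‖ ^ 2 * ‖g b‖ ^ 2 - ⟪g a, g b⟫ ^ 2)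
      ≤ ‖a‖ * (‖g a‖ * ‖g b - t • g a‖) := by
        gcongr; exact sqrt_gram_le_norm_mul_norm_sub_smul _ _ t
    _ = ‖g a‖ * (‖a‖ * ‖g (b - t • a)‖) := by rw [map_sub, map_smul]; ring
    _ ≤ ‖g a‖ * (‖a‖ * (‖g‖ * ‖b - t • a‖)) := by gcongr; exact g.le_opNorm _
    _ = ‖g‖ * ‖g a‖ * √(‖a‖ ^ 2 * ‖b‖ ^ 2 - ⟪a, b⟫ ^ 2) := by rw [← ht]; ring

end Gram

lemma projDist_nonneg {d : ℕ} (u v : EuclideanSpace ℝ (Fin d)) : 0 ≤ projDist u v := by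
  unfold projDist; positivity

lemma projDist_map_le {d : ℕ} (g : EuclideanSpace ℝ (Fin d) ≃L[ℝ] EuclideanSpace ℝ (Fin d))
    (u v : EuclideanSpace ℝ (Fin d)) :
    projDist (g u) (g v) ≤
      ‖(g : EuclideanSpace ℝ (Fin d) →L[ℝ] EuclideanSpace ℝ (Fin d))‖ *
        ‖(g.symm : EuclideanSpace ℝ (Fin d) →L[ℝ] EuclideanSpace ℝ (Fin d))‖ * projDist u v := by
  rcases eq_or_ne u 0 with rfl | hu
  · simp [projDist]
  rcases eq_or_ne v 0 with rfl | hv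
  · simp [projDist]
  have hgu : g u ≠ 0 := g.map_ne_zero_iff.mpr hu
  have hgv : g v ≠ 0 := g.map_ne_zero_iff.mpr hv
  have hv_le : ‖v‖ ≤ ‖(g.symm : EuclideanSpace ℝ (Fin d) →L[ℝ] EuclideanSpace ℝ (Fin d))‖ * ‖g v‖ := by
    simpa using (g.symm : EuclideanSpace ℝ (Fin d) →L[ℝ] EuclideanSpace ℝ (Fin d)).le_opNorm (g v)
  have h_area := norm_mul_sqrt_gram_map_le
    (g : EuclideanSpace ℝ (Fin d) →L[ℝ] EuclideanSpace ℝ (Fin d)) u v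
  simp only [ContinuousLinearEquiv.coe_coe] at h_area
  unfold projDist
  rw [mul_div_assoc', div_le_div_iff₀ (by positivity) (by positivity)]
  calc _ = (‖u‖ * √(‖g u‖ ^ 2 * ‖g v‖ ^ 2 - ⟪g u, g v⟫ ^ 2)) * ‖v‖ := by ring
    _ ≤ _ := mul_le_mul h_area hv_le (norm_nonneg _) (by positivity)
    _ = _ := by ring

lemma norm_mul_norm_symm_le_matN_pow_four {d : ℕ}
    (g : EuclideanSpace ℝ (Fin d) ≃L[ℝ] EuclideanSpace ℝ (Fin d)) :
    ‖(g : EuclideanSpace ℝ (Fin d) →L[ℝ] EuclideanSpace ℝ (Fin d))‖ *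
      ‖(g.symm : EuclideanSpace ℝ (Fin d) →L[ℝ] EuclideanSpace ℝ (Fin d))‖ ≤ matN g ^ 4 := by
  rcases subsingleton_or_nontrivial (EuclideanSpace ℝ (Fin d)) with _ | _
  · rw [ContinuousLinearMap.opNorm_subsingleton, zero_mul]; positivity
  have h_sq : ‖(g : EuclideanSpace ℝ (Fin d) →L[ℝ] EuclideanSpace ℝ (Fin d))‖ *
      ‖(g.symm : EuclideanSpace ℝ (Fin d) →L[ℝ] EuclideanSpace ℝ (Fin d))‖ ≤ matN g ^ 2 :=
    sq (matN g) ▸ mul_le_mul (le_max_left _ _) (le_max_right _ _) (norm_nonneg _)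
      ((norm_nonneg _).trans (le_max_left _ _))
  nlinarith [g.one_le_norm_mul_norm_symm]

theorem stmt2_general {d : ℕ} (g : EuclideanSpace ℝ (Fin d) ≃L[ℝ] EuclideanSpace ℝ (Fin d))
    (u v : EuclideanSpace ℝ (Fin d)) :
    projDist (g u) (g v) ≤ matN g ^ 4 * projDist u v :=
  (projDist_map_le g u v).trans
    (mul_le_mul_of_nonneg_right (norm_mul_norm_symm_le_matN_pow_four g) (projDist_nonneg u v))

/-- For `g ∈ GL(d,ℝ)` and unit vectors `u, v`,
`d(g·ū, g·v̄) ≤ N(g)⁴ · d(ū, v̄)`. -/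
theorem stmt2 {d : ℕ} (g : EuclideanSpace ℝ (Fin d) ≃L[ℝ] EuclideanSpace ℝ (Fin d))
    (u v : EuclideanSpace ℝ (Fin d)) (hu : ‖u‖ = 1) (hv : ‖v‖ = 1) :
    projDist (g u) (g v) ≤ matN g ^ 4 * projDist u v :=
  stmt2_general g u v
end

section
/- For g, g' ∈ GL(d,ℝ) and any unit vector v ∈ ℝ^d, the projective distance satisfies d(g·v̄, g'·v̄) ≤ ‖g - g'‖ · (N(g) N(g'))^{1/2}, where N(g) = max(‖g‖, ‖g⁻¹‖). -/
open scoped RealInnerProductSpace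

/-!
Subtracting `g' v` from `g v` does not change the wedge with `g' v`, so
`‖g v ∧ g' v‖ ≤ ‖(g - g') v‖ ‖g' v‖` and hence `d(g·v̄, g'·v̄) ≤ ‖g - g'‖ / ‖g v‖ ≤ ‖g - g'‖ N(g)`,
using `1 = ‖g⁻¹ g v‖ ≤ ‖g⁻¹‖ ‖g v‖`. By symmetry the same holds with `N(g')`, and the minimum of
`N(g)` and `N(g')` is at most their geometric mean.
-/

/-- The Gram-determinant form of `u ∧ v = (u - v) ∧ v`. -/
lemma norm_sq_mul_norm_sq_sub_inner_sq_sub_left {E : Type*} [NormedAddCommGroup E]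
    [InnerProductSpace ℝ E] (u v : E) :
    ‖u‖ ^ 2 * ‖v‖ ^ 2 - ⟪u, v⟫ ^ 2 = ‖u - v‖ ^ 2 * ‖v‖ ^ 2 - ⟪u - v, v⟫ ^ 2 := by
  rw [norm_sub_sq_real, inner_sub_left, real_inner_self_eq_norm_sq]
  ring

lemma projDist_comm {d : ℕ} (u v : EuclideanSpace ℝ (Fin d)) :
    projDist u v = projDist v u := by
  rw [projDist, projDist, real_inner_comm, mul_comm (‖u‖ ^ 2), mul_comm ‖u‖]

lemma projDist_le_norm_sub_div_norm {d : ℕ} (u v : EuclideanSpace ℝ (Fin d)) :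
    projDist u v ≤ ‖u - v‖ / ‖u‖ := by
  rcases eq_or_ne v 0 with rfl | hv
  · rw [projDist, norm_zero, mul_zero, div_zero]
    positivity
  have hv' : ‖v‖ ≠ 0 := norm_ne_zero_iff.mpr hv
  have wedge_le : √(‖u‖ ^ 2 * ‖v‖ ^ 2 - ⟪u, v⟫ ^ 2) ≤ ‖u - v‖ * ‖v‖ := by
    rw [norm_sq_mul_norm_sq_sub_inner_sq_sub_left,
      ← Real.sqrt_sq (by positivity : 0 ≤ ‖u - v‖ * ‖v‖)]
    exact Real.sqrt_le_sqrt (by nlinarith [sq_nonneg ⟪u - v, v⟫])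
  calc projDist u v ≤ ‖u - v‖ * ‖v‖ / (‖u‖ * ‖v‖) := by
        rw [projDist]; gcongr
    _ = ‖u - v‖ / ‖u‖ := mul_div_mul_right _ _ hv'

lemma ContinuousLinearEquiv.inv_norm_apply_le_norm_symm {𝕜 E F : Type*}
    [NontriviallyNormedField 𝕜]
    [NormedAddCommGroup E] [NormedSpace 𝕜 E] [NormedAddCommGroup F] [NormedSpace 𝕜 F]
    (g : E ≃L[𝕜] F) {v : E} (hv : ‖v‖ = 1) :
    ‖g v‖⁻¹ ≤ ‖(g.symm : F →L[𝕜] E)‖ := by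
  have h : 1 ≤ ‖(g.symm : F →L[𝕜] E)‖ * ‖g v‖ := by
    simpa [hv] using (g.symm : F →L[𝕜] E).le_opNorm (g v)
  have hpos : 0 < ‖g v‖ := pos_of_mul_pos_right (zero_lt_one.trans_le h) (norm_nonneg _)
  exact (inv_le_iff_one_le_mul₀ hpos).mpr h

lemma projDist_apply_le_norm_sub_mul_matN {d : ℕ}
    (g g' : EuclideanSpace ℝ (Fin d) ≃L[ℝ] EuclideanSpace ℝ (Fin d))
    {v : EuclideanSpace ℝ (Fin d)} (hv : ‖v‖ = 1) :
    projDist (g v) (g' v) ≤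
      ‖(g : EuclideanSpace ℝ (Fin d) →L[ℝ] EuclideanSpace ℝ (Fin d)) - g'‖ * matN g := by
  have hdiff : ‖g v - g' v‖ ≤
      ‖(g : EuclideanSpace ℝ (Fin d) →L[ℝ] EuclideanSpace ℝ (Fin d)) - g'‖ := by
    simpa [hv] using
      ((g : EuclideanSpace ℝ (Fin d) →L[ℝ] EuclideanSpace ℝ (Fin d)) - g').le_opNorm v
  have hinv : ‖g v‖⁻¹ ≤ matN g :=
    (g.inv_norm_apply_le_norm_symm hv).trans (le_max_right _ _)
  calc projDist (g v) (g' v) ≤ ‖g v - g' v‖ * ‖g v‖⁻¹ := by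
        simpa [div_eq_mul_inv] using projDist_le_norm_sub_div_norm (g v) (g' v)
    _ ≤ _ := by gcongr

lemma matN_nonneg {d : ℕ} (g : EuclideanSpace ℝ (Fin d) ≃L[ℝ] EuclideanSpace ℝ (Fin d)) :
    0 ≤ matN g :=
  (norm_nonneg _).trans (le_max_left _ _)

lemma min_le_sqrt_mul {x y : ℝ} (hx : 0 ≤ x) (hy : 0 ≤ y) : min x y ≤ √(x * y) :=
  Real.le_sqrt_of_sq_le <| by
    rw [sq]; exact mul_le_mul (min_le_left _ _) (min_le_right _ _) (le_min hx hy) hx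

/-- For `g, g' ∈ GL(d,ℝ)` and a unit vector `v`,
`d(g·v̄, g'·v̄) ≤ ‖g - g'‖ (N(g)N(g'))^{1/2}`. -/
theorem stmt4 {d : ℕ}
    (g g' : EuclideanSpace ℝ (Fin d) ≃L[ℝ] EuclideanSpace ℝ (Fin d))
    (v : EuclideanSpace ℝ (Fin d)) (hv : ‖v‖ = 1) :
    projDist (g v) (g' v) ≤
      ‖(g : EuclideanSpace ℝ (Fin d) →L[ℝ] EuclideanSpace ℝ (Fin d)) -
        (g' : EuclideanSpace ℝ (Fin d) →L[ℝ] EuclideanSpace ℝ (Fin d))‖ *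
        Real.sqrt (matN g * matN g') := by
  have bound_g := projDist_apply_le_norm_sub_mul_matN g g' hv
  have bound_g' := projDist_apply_le_norm_sub_mul_matN g' g hv
  rw [projDist_comm, norm_sub_rev] at bound_g'
  calc projDist (g v) (g' v)
      ≤ ‖(g : EuclideanSpace ℝ (Fin d) →L[ℝ] EuclideanSpace ℝ (Fin d)) - g'‖ *
          min (matN g) (matN g') := by
        rw [mul_min_of_nonneg _ _ (norm_nonneg _)]
        exact le_min bound_g bound_g'
    _ ≤ _ := by gcongr; exact min_le_sqrt_mul (matN_nonneg g) (matN_nonneg g')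
end
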